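/- arXiv:2205.05923 — 2 statements merged into one kernel-verified Lean document; each statement's English description precedes it below -/
import Mathlib

section
/- Let G be a connected labeled Hamiltonian graph on vertex set [n] (i.e., C_n is a subgraph of G). Then the Hankel edge ideal I_G is a radical ideal if and only if G is the complete graph K_n. -/
open MvPolynomial

/-- The Hankel binomial `g_{ij} = x_i x_{j+1} - x_j x_{i+1}` (0-indexed vertices). -/
noncomputable def hg (n : ℕ) (K : Type*) [Field K] (i j : Fin n) :
    MvPolynomial (Fin (n + 1)) K :=
  X i.castSucc * X j.succ - X j.castSucc * X i.succ

/-- The generating set of the Hankel edge ideal of a graph `G` on `[n]`. -/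
noncomputable def hgenSet (n : ℕ) (K : Type*) [Field K] (G : SimpleGraph (Fin n)) :
    Set (MvPolynomial (Fin (n + 1)) K) :=
  { f | ∃ i j : Fin n, i < j ∧ G.Adj i j ∧ f = hg n K i j }

/-- The Hankel edge ideal `I_G`. -/
noncomputable def hankelIdeal (n : ℕ) (K : Type*) [Field K] (G : SimpleGraph (Fin n)) :
    Ideal (MvPolynomial (Fin (n + 1)) K) :=
  Ideal.span (hgenSet n K G)

/-- `I_X`, the ideal of 2-minors of the 2×n Hankel matrix, i.e. `I_{K_n}`. -/
noncomputable def IX (n : ℕ) (K : Type*) [Field K] :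
    Ideal (MvPolynomial (Fin (n + 1)) K) :=
  hankelIdeal n K ⊤

/-- The height of an ideal: the infimum of the heights of primes containing it. -/
noncomputable def ht {R : Type*} [CommRing R] (I : Ideal R) : ℕ∞ :=
  ⨅ (p : PrimeSpectrum R) (_ : I ≤ p.asIdeal), Order.height p

/-- The minimal number of generators of an ideal. -/
noncomputable def mu {R : Type*} [CommRing R] (I : Ideal R) : ℕ∞ :=
  ⨅ (s : Finset R) (_ : Ideal.span (s : Set R) = I), (s.card : ℕ∞)

/-- The arithmetical rank of an ideal. -/
noncomputable def ara {R : Type*} [CommRing R] (I : Ideal R) : ℕ∞ :=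
  ⨅ (s : Finset R) (_ : (Ideal.span (s : Set R)).radical = I.radical), (s.card : ℕ∞)

/-- The labeled path `L_n` with edges `{i, i+1}` (0-indexed). -/
def pathG (n : ℕ) : SimpleGraph (Fin n) :=
  SimpleGraph.fromRel (fun i j => (i : ℕ) + 1 = (j : ℕ))

/-- The labeled cycle `C_n` with edges `{i, i+1}` and `{0, n-1}` (0-indexed). -/
def cycleG (n : ℕ) : SimpleGraph (Fin n) :=
  SimpleGraph.fromRel (fun i j =>
    (i : ℕ) + 1 = (j : ℕ) ∨ ((i : ℕ) = 0 ∧ (j : ℕ) = n - 1))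

/-- The monomial prime ideal generated by the variables with index in `[lo, hi]` (0-indexed). -/
noncomputable def Pvars (n : ℕ) (K : Type*) [Field K] (lo hi : ℕ) :
    Ideal (MvPolynomial (Fin (n + 1)) K) :=
  Ideal.span { f | ∃ i : Fin (n + 1), lo ≤ (i : ℕ) ∧ (i : ℕ) ≤ hi ∧ f = X i }

/-!
If `{i, j}` (`i < j`) is not an edge, then `g_{ij} ∉ I_G`: the linear form summing the
coefficients of the monomials `x_p x_q` with `p + q = i + j + 1` and `p ≤ i` kills every other
Hankel binomial, hence kills `I_G` (whose degree-two part is spanned by its generators), but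
takes the value `1` on `g_{ij}`. Nevertheless `g_{ij}` lies in every prime `P ⊇ I_G`. By the
path relations `x_k x_{k+2} - x_{k+1}^2`, either `P` contains all the middle variables
`x_1, …, x_{n-1}` (and then, with the edge `{0, n-1}` of the cycle, `g_{ij} ∈ P`), or none of
them, and then `g_{ij} ∈ P` because `x_{i+1} ⋯ x_{j-1} g_{ij} ∈ I_{L_n}`.

Conversely `I_{K_n}` is the kernel of `φ : x_i ↦ s t^i`, hence prime. The relations
`x_a x_b ≡ x_c x_d` (`a + b = c + d`) push weight greedily towards `x_n`, so modulo `I_{K_n}` every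
monomial of degree `d` and weight `w` is congruent to a normal monomial depending only on `(d, w)`.
Sending `s^d t^w` to it gives a linear section `σ` with `σ (φ f) ≡ f`, so `φ f = 0` forces
`f ∈ I_{K_n}`.
-/

namespace MvPolynomial

variable {σ R : Type*} [CommSemiring R]

theorem IsHomogeneous.coeff_mul_of_degree_eq {g : MvPolynomial σ R} {d : ℕ}
    (hg : g.IsHomogeneous d) (r : MvPolynomial σ R) {m : σ →₀ ℕ} (hm : m.degree = d) :
    coeff m (r * g) = coeff 0 r * coeff m g := by
  classical
  rw [coeff_mul, Finset.sum_eq_single (0, m) _ (by simp)]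
  rintro ⟨p, q⟩ hpq hne
  rw [Finset.HasAntidiagonal.mem_antidiagonal] at hpq
  dsimp only at hpq ⊢
  have hp : p.degree ≠ 0 := by
    rw [Ne, Finsupp.degree_eq_zero_iff]
    rintro rfl
    simp_all
  have hq : q.degree ≠ d := by
    rw [← hm, ← hpq, map_add]
    omega
  rw [hg.coeff_eq_zero hq, mul_zero]

theorem IsHomogeneous.homogeneousComponent_mul {g : MvPolynomial σ R} {d : ℕ}
    (hg : g.IsHomogeneous d) (r : MvPolynomial σ R) :
    homogeneousComponent d (r * g) = coeff 0 r • g := by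
  ext m
  rw [coeff_homogeneousComponent, coeff_smul, smul_eq_mul]
  split_ifs with hm
  · exact hg.coeff_mul_of_degree_eq r hm
  · rw [hg.coeff_eq_zero hm, mul_zero]

theorem homogeneousComponent_mem_span_of_mem_ideal_span {T : Set (MvPolynomial σ R)} {d : ℕ}
    (hT : ∀ g ∈ T, g.IsHomogeneous d) {f : MvPolynomial σ R} (hf : f ∈ Ideal.span T) :
    homogeneousComponent d f ∈ Submodule.span R T := by
  suffices ∀ r, homogeneousComponent d (r * f) ∈ Submodule.span R T by simpa using this 1
  induction hf using Submodule.span_induction with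
  | mem g hg =>
    intro r
    rw [(hT g hg).homogeneousComponent_mul]
    exact Submodule.smul_mem _ _ (Submodule.subset_span hg)
  | zero => simp
  | add f₁ f₂ _ _ h₁ h₂ =>
    intro r
    rw [mul_add, map_add]
    exact add_mem (h₁ r) (h₂ r)
  | smul a f _ h =>
    intro r
    rw [smul_eq_mul, ← mul_assoc]
    exact h _

end MvPolynomial

namespace Hankel

variable {n : ℕ} {K : Type*} [Field K]

theorem isHomogeneous_hg (a b : Fin n) : (hg n K a b).IsHomogeneous 2 :=
  ((isHomogeneous_X K _).mul (isHomogeneous_X K _)).sub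
    ((isHomogeneous_X K _).mul (isHomogeneous_X K _))

variable (n K) in
noncomputable def chainFunctional (i j : ℕ) : MvPolynomial (Fin (n + 1)) K →ₗ[K] K :=
  ∑ pq : Fin (n + 1) × Fin (n + 1) with (pq.1 : ℕ) + pq.2 = i + j + 1 ∧ (pq.1 : ℕ) ≤ i,
    lcoeff K (Finsupp.single pq.1 1 + Finsupp.single pq.2 1)

theorem chainFunctional_X_mul_X {i j : ℕ} (hij : i < j) {a b : Fin (n + 1)} (hab : a ≤ b) :
    chainFunctional n K i j (X a * X b) =
      if (a : ℕ) + b = i + j + 1 ∧ (a : ℕ) ≤ i then 1 else 0 := by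
  have hab' : (a : ℕ) ≤ b := hab
  have hcoeff : ∀ pq : Fin (n + 1) × Fin (n + 1),
      coeff (Finsupp.single pq.1 1 + Finsupp.single pq.2 1) (X a * X b : MvPolynomial _ K) =
        if pq = (a, b) ∨ pq = (b, a) then 1 else 0 := by
    rintro ⟨p, q⟩
    simp only [X, monomial_mul, one_mul, coeff_monomial,
      Finsupp.single_add_single_eq_single_add_single one_ne_zero one_ne_zero]
    simp [eq_comm, and_comm]
  rw [chainFunctional, LinearMap.sum_apply, Finset.sum_filter]
  simp only [lcoeff_apply, hcoeff]
  rw [Finset.sum_eq_single (a, b) _ (by simp)]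
  · simp
  rintro ⟨p, q⟩ - hne
  split_ifs with hpq hmem
  · simp only [Prod.mk.injEq] at hpq hmem hne
    obtain ⟨rfl, rfl⟩ | ⟨rfl, rfl⟩ := hmem
    · simp at hne
    · omega
  all_goals rfl

theorem chainFunctional_hg {i j : ℕ} (hij : i < j) {a b : Fin n} (hab : a < b) :
    chainFunctional n K i j (hg n K a b) = if (a : ℕ) = i ∧ (b : ℕ) = j then 1 else 0 := by
  have hab' : (a : ℕ) < b := hab
  rw [hg, map_sub, mul_comm (X b.castSucc),
    chainFunctional_X_mul_X hij (by simp [Fin.le_def]; omega),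
    chainFunctional_X_mul_X hij (by simp [Fin.le_def]; omega)]
  simp only [Fin.val_castSucc, Fin.val_succ]
  split_ifs <;> first | omega | simp

theorem hg_notMem_hankelIdeal {G : SimpleGraph (Fin n)} {i j : Fin n} (hij : i < j)
    (hadj : ¬ G.Adj i j) : hg n K i j ∉ hankelIdeal n K G := by
  intro hmem
  have hspan : hg n K i j ∈ Submodule.span K (hgenSet n K G) := by
    rw [← homogeneousComponent_eq_self (isHomogeneous_hg i j)]
    refine homogeneousComponent_mem_span_of_mem_ideal_span ?_ hmem
    rintro _ ⟨a, b, -, -, rfl⟩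
    exact isHomogeneous_hg a b
  have hker : Submodule.span K (hgenSet n K G) ≤ LinearMap.ker (chainFunctional n K i j) := by
    refine Submodule.span_le.mpr ?_
    rintro _ ⟨a, b, hab, hadj', rfl⟩
    rw [SetLike.mem_coe, LinearMap.mem_ker, chainFunctional_hg hij hab, if_neg]
    rintro ⟨hai, hbj⟩
    rw [Fin.ext hai, Fin.ext hbj] at hadj'
    exact hadj hadj'
  simpa [chainFunctional_hg hij hij] using hker hspan

variable (n K) in
noncomputable def var (k : ℕ) : MvPolynomial (Fin (n + 1)) K := X ⟨min k n, by omega⟩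

theorem X_eq_var (c : Fin (n + 1)) : (X c : MvPolynomial (Fin (n + 1)) K) = var n K c := by
  rw [var]
  congr 1
  exact Fin.ext (min_eq_left (Nat.lt_succ_iff.mp c.is_lt)).symm

theorem hg_eq_var (a b : Fin n) :
    hg n K a b = var n K a * var n K (b + 1) - var n K b * var n K (a + 1) := by
  simp only [hg, X_eq_var, Fin.val_castSucc, Fin.val_succ]

theorem binom_mem_hankelIdeal {G : SimpleGraph (Fin n)} {i j : ℕ} (hij : i < j) (hj : j < n)
    (hadj : G.Adj ⟨i, hij.trans hj⟩ ⟨j, hj⟩) :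
    var n K i * var n K (j + 1) - var n K j * var n K (i + 1) ∈ hankelIdeal n K G :=
  hg_eq_var (K := K) ⟨i, hij.trans hj⟩ ⟨j, hj⟩ ▸ Ideal.subset_span ⟨_, _, hij, hadj, rfl⟩

theorem pathG_le_cycleG : pathG n ≤ cycleG n := fun _ _ h => by
  rw [pathG, SimpleGraph.fromRel_adj] at h
  rw [cycleG, SimpleGraph.fromRel_adj]
  tauto

theorem pathG_adj {i : ℕ} (h : i + 1 < n) : (pathG n).Adj ⟨i, by omega⟩ ⟨i + 1, h⟩ := by
  simp [pathG, Fin.ext_iff]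

theorem cycleG_adj_zero_last (h : 2 ≤ n) : (cycleG n).Adj ⟨0, by omega⟩ ⟨n - 1, by omega⟩ := by
  simp [cycleG, Fin.ext_iff]
  omega

section Radical

variable {G : SimpleGraph (Fin n)}

theorem prod_mul_binom_mem_hankelIdeal (hpath : pathG n ≤ G) {i j : ℕ} (hij : i < j)
    (hj : j < n) :
    (∏ t ∈ Finset.Ico (i + 1) j, var n K t) *
      (var n K i * var n K (j + 1) - var n K j * var n K (i + 1)) ∈ hankelIdeal n K G := by
  induction j, Nat.succ_le_of_lt hij using Nat.le_induction with
  | base => simpa using binom_mem_hankelIdeal hij hj (hpath (pathG_adj hj))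
  | succ j hij' ih =>
    rw [Finset.prod_Ico_succ_top hij']
    have hstep := binom_mem_hankelIdeal (K := K) (Nat.lt_succ_self j) hj (hpath (pathG_adj hj))
    -- `x_j g_{i,j+1} = x_{j+1} g_{ij} + x_i g_{j,j+1}`
    convert add_mem (Ideal.mul_mem_left _ (var n K (j + 1)) (ih (by omega) (by omega)))
      (Ideal.mul_mem_left _ ((∏ t ∈ Finset.Ico (i + 1) j, var n K t) * var n K i) hstep) using 1
    ring

variable {P : Ideal (MvPolynomial (Fin (n + 1)) K)}

theorem var_mem_iff_var_succ_mem (hpath : pathG n ≤ G) (hP : P.IsPrime)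
    (hle : hankelIdeal n K G ≤ P) {k : ℕ} (hk : 1 ≤ k) (hkn : k + 1 < n) :
    var n K k ∈ P ↔ var n K (k + 1) ∈ P := by
  have mem_of_sq_mem : ∀ {f}, f * f ∈ P → f ∈ P := fun h => (hP.mem_or_mem h).elim id id
  obtain ⟨m, rfl⟩ : ∃ m, k = m + 1 := ⟨k - 1, by omega⟩
  have hg₁ := hle (binom_mem_hankelIdeal (K := K) (Nat.lt_succ_self m) (by omega)
    (hpath (pathG_adj (by omega))))
  have hg₂ := hle (binom_mem_hankelIdeal (K := K) (Nat.lt_succ_self (m + 1)) hkn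
    (hpath (pathG_adj hkn)))
  constructor
  · intro h
    refine mem_of_sq_mem ?_
    simpa using sub_mem (P.mul_mem_right (var n K (m + 1 + 1 + 1)) h) hg₂
  · intro h
    refine mem_of_sq_mem ?_
    simpa using sub_mem (P.mul_mem_left (var n K m) h) hg₁

theorem var_mem_iff_var_one_mem (hpath : pathG n ≤ G) (hP : P.IsPrime)
    (hle : hankelIdeal n K G ≤ P) {k : ℕ} (hk : 1 ≤ k) (hkn : k < n) :
    var n K k ∈ P ↔ var n K 1 ∈ P := by
  induction k, hk using Nat.le_induction with
  | base => rfl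
  | succ k hk ih => rw [← var_mem_iff_var_succ_mem hpath hP hle hk hkn, ih (by omega)]

theorem binom_mem_of_isPrime (hcyc : cycleG n ≤ G) (hP : P.IsPrime)
    (hle : hankelIdeal n K G ≤ P) {i j : ℕ} (hij : i < j) (hj : j < n) :
    var n K i * var n K (j + 1) - var n K j * var n K (i + 1) ∈ P := by
  have hpath := pathG_le_cycleG.trans hcyc
  by_cases h₁ : var n K 1 ∈ P
  · have hmid : ∀ k, 1 ≤ k → k < n → var n K k ∈ P :=
      fun k hk hkn => (var_mem_iff_var_one_mem hpath hP hle hk hkn).mpr h₁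
    by_cases hlast : i = 0 ∧ j = n - 1
    · obtain ⟨rfl, rfl⟩ := hlast
      exact hle (binom_mem_hankelIdeal hij hj (hcyc (cycleG_adj_zero_last (by omega))))
    refine sub_mem ?_ (P.mul_mem_right _ (hmid j (by omega) hj))
    rcases Nat.eq_zero_or_pos i with rfl | hi
    · exact P.mul_mem_left _ (hmid (j + 1) (by omega) (by omega))
    · exact P.mul_mem_right _ (hmid i hi (by omega))
  · refine (hP.mem_or_mem (hle (prod_mul_binom_mem_hankelIdeal hpath hij hj))).resolve_left ?_
    rw [hP.prod_mem_iff]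
    rintro ⟨t, ht, htP⟩
    rw [Finset.mem_Ico] at ht
    exact h₁ ((var_mem_iff_var_one_mem hpath hP hle (by omega) (by omega)).mp htP)

theorem hg_mem_radical (hcyc : cycleG n ≤ G) {a b : Fin n} (hab : a < b) :
    hg n K a b ∈ (hankelIdeal n K G).radical := by
  rw [Ideal.radical_eq_sInf, Ideal.mem_sInf, hg_eq_var]
  rintro P ⟨hle, hP⟩
  exact binom_mem_of_isPrime hcyc hP hle hab b.isLt

end Radical

section Toric

local notation "π" => Ideal.Quotient.mk (IX n K)

theorem mk_var_mul_var_succ {i j : ℕ} (hij : i < j) (hj : j < n) :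
    π (var n K i * var n K (j + 1)) = π (var n K j * var n K (i + 1)) :=
  Ideal.Quotient.eq.mpr (binom_mem_hankelIdeal hij hj (by simp [Fin.ext_iff]; omega))

theorem mk_var_mul_var_spread {a b t : ℕ} (hab : a ≤ b) (ht : t ≤ a) (hbt : b + t ≤ n) :
    π (var n K a * var n K b) = π (var n K (a - t) * var n K (b + t)) := by
  induction t with
  | zero => rfl
  | succ t ih =>
    have h := mk_var_mul_var_succ (n := n) (K := K) (i := a - (t + 1)) (j := b + t)
      (by omega) (by omega)
    rw [show a - (t + 1) + 1 = a - t by omega] at h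
    rw [ih (by omega) (by omega), mul_comm, ← h, add_assoc]

theorem mk_var_mul_var {a b : ℕ} (ha : a ≤ n) (hb : b ≤ n) :
    π (var n K a * var n K b) =
      π (var n K (a + b - min (a + b) n) * var n K (min (a + b) n)) := by
  wlog hab : a ≤ b generalizing a b
  · rw [mul_comm, add_comm a b, this hb ha (by omega)]
  rw [mk_var_mul_var_spread hab (min_le_left a (n - b)) (by omega),
    show a - min a (n - b) = a + b - min (a + b) n by omega,
    show b + min a (n - b) = min (a + b) n by omega]

variable (n K) in
noncomputable def normalMonomial : ℕ → ℕ → MvPolynomial (Fin (n + 1)) K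
  | 0, _ => 1
  | d + 1, w => var n K (min w n) * normalMonomial d (w - min w n)

theorem mk_var_mul_normalMonomial {k d w : ℕ} (hk : k ≤ n) (hw : w ≤ n * d) :
    π (var n K k * normalMonomial n K d w) = π (normalMonomial n K (d + 1) (w + k)) := by
  induction d generalizing k w with
  | zero =>
    obtain rfl : w = 0 := by simpa using hw
    simp [normalMonomial, min_eq_left hk]
  | succ d ih =>
    set m := min (w + k) n
    have hm : min (k + min w n) n = m := by omega
    calc π (var n K k * normalMonomial n K (d + 1) w)
        = π (var n K k * var n K (min w n)) * π (normalMonomial n K d (w - min w n)) := by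
          rw [normalMonomial, ← map_mul, mul_assoc]
      _ = π (var n K m) *
            π (var n K (k + min w n - m) * normalMonomial n K d (w - min w n)) := by
          rw [mk_var_mul_var hk (min_le_right _ _), hm, map_mul, map_mul]
          ring
      _ = π (var n K m * normalMonomial n K (d + 1) (w + k - m)) := by
          rw [ih (by omega) (by rw [Nat.mul_succ] at hw; omega), ← map_mul,
            show w - min w n + (k + min w n - m) = w + k - m by omega]
      _ = π (normalMonomial n K (d + 1 + 1) (w + k)) := rfl

variable (n K) in
noncomputable def param : MvPolynomial (Fin (n + 1)) K →ₐ[K] MvPolynomial (Fin 2) K :=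
  aeval fun i => X 0 * X 1 ^ (i : ℕ)

variable (n K) in
noncomputable def normalSection : MvPolynomial (Fin 2) K →ₗ[K] MvPolynomial (Fin (n + 1)) K :=
  (basisMonomials (Fin 2) K).constr K fun e => normalMonomial n K (e 0) (e 1)

theorem normalSection_monomial (e : Fin 2 →₀ ℕ) (c : K) :
    normalSection n K (monomial e c) = c • normalMonomial n K (e 0) (e 1) := by
  have h : monomial e c = c • basisMonomials (Fin 2) K e := by
    rw [coe_basisMonomials, smul_monomial, smul_eq_mul, mul_one]
  rw [h, map_smul, normalSection, Module.Basis.constr_basis]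

theorem IX_le_ker_param : IX n K ≤ RingHom.ker (param n K) := by
  refine Ideal.span_le.mpr ?_
  rintro _ ⟨a, b, -, -, rfl⟩
  simp only [SetLike.mem_coe, RingHom.mem_ker, hg, param, map_sub, map_mul, aeval_X,
    Fin.val_castSucc, Fin.val_succ]
  ring

theorem exists_param_monomial (u : Fin (n + 1) →₀ ℕ) (a : K) :
    ∃ (e : Fin 2 →₀ ℕ) (c : K), param n K (monomial u a) = monomial e c ∧ e 1 ≤ n * e 0 ∧
      π (monomial u a) = π (C c * normalMonomial n K (e 0) (e 1)) := by
  refine induction_on_monomial (motive := fun p => ∃ (e : Fin 2 →₀ ℕ) (c : K),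
    param n K p = monomial e c ∧ e 1 ≤ n * e 0 ∧ π p = π (C c * normalMonomial n K (e 0) (e 1)))
    (fun a => ⟨0, a, by simp [param], by simp, by simp [normalMonomial]⟩) ?_ u a
  rintro p i ⟨e, c, hp, he, hπ⟩
  have hi : (i : ℕ) ≤ n := Nat.lt_succ_iff.mp i.is_lt
  set e' : Fin 2 →₀ ℕ := e + Finsupp.single 0 1 + Finsupp.single 1 (i : ℕ)
  have h₀ : e' 0 = e 0 + 1 := by simp [e']
  have h₁ : e' 1 = e 1 + i := by simp [e']
  refine ⟨e', c, ?_, ?_, ?_⟩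
  · rw [map_mul, hp, param, aeval_X, X, X, monomial_pow, monomial_mul, monomial_mul]
    simp [e', add_assoc]
  · rw [h₀, h₁, Nat.mul_succ]
    omega
  · rw [h₀, h₁, map_mul, hπ, X_eq_var, map_mul, map_mul, mul_assoc, ← map_mul,
      mul_comm (normalMonomial _ _ _ _), mk_var_mul_normalMonomial hi he]

theorem mk_normalSection_param (p : MvPolynomial (Fin (n + 1)) K) :
    π (normalSection n K (param n K p)) = π p := by
  induction p using induction_on' with
  | monomial u a =>
    obtain ⟨e, c, hp, -, hπ⟩ := exists_param_monomial u a
    rw [hp, normalSection_monomial, hπ, smul_eq_C_mul]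
  | add p q hp hq => rw [map_add, map_add, map_add, hp, hq, map_add]

theorem ker_param_le_IX : RingHom.ker (param n K) ≤ IX n K := fun f hf => by
  rw [← Ideal.Quotient.eq_zero_iff_mem, ← mk_normalSection_param, RingHom.mem_ker.mp hf,
    map_zero, map_zero]

theorem isPrime_IX : (IX n K).IsPrime := by
  rw [le_antisymm IX_le_ker_param ker_param_le_IX]
  exact RingHom.ker_isPrime _

end Toric

end Hankel

theorem stmt_5_general (n : ℕ) (K : Type*) [Field K]
    (G : SimpleGraph (Fin n)) (hcyc : cycleG n ≤ G) :
    (hankelIdeal n K G).IsRadical ↔ G = ⊤ := by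
  refine ⟨fun hrad => ?_, by rintro rfl; exact Hankel.isPrime_IX.isRadical⟩
  rw [eq_top_iff]
  intro a b hab
  wlog hlt : a < b generalizing a b
  · exact (this hab.symm (lt_of_le_of_ne (not_lt.mp hlt) hab.symm)).symm
  by_contra hnadj
  exact Hankel.hg_notMem_hankelIdeal hlt hnadj (hrad (Hankel.hg_mem_radical hcyc hlt))

/-- For a connected labeled Hamiltonian graph `G` on `[n]`, the ideal
`I_G` is radical iff `G = K_n`. -/
theorem stmt_5 (n : ℕ) (K : Type*) [Field K] (hn : 3 ≤ n)
    (G : SimpleGraph (Fin n)) (hG : G.Connected) (hcyc : cycleG n ≤ G) :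
    (hankelIdeal n K G).IsRadical ↔ G = ⊤ :=
  stmt_5_general n K G hcyc
end

section
/- Let T_1 be the rooted labeled path on n ≥ 3 vertices with edges {1,2}, {1,3}, and {i,i+1} for 3 ≤ i ≤ n-1. With respect to the reverse lexicographic order induced by x_1 > x_2 > ... > x_{n+1}, the set {x_1x_2x_4 - x_1x_3^2, g_{12}, g_{13}, g_{i,i+1} (3 ≤ i ≤ n-1)} is a Gröbner basis of I_{T_1}, and hence ini(I_{T_1}) = (x_2x_3, x_1x_3^2, x_2^2, x_{i+1}^2 : 3 ≤ i ≤ n-1). -/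
open MvPolynomial

/-- The rooted labeled path `T₁` on `[n]` (1-based edges `{1,2}, {1,3}, {i,i+1}` for
`3 ≤ i ≤ n-1`; here 0-indexed). -/
def T1graph (n : ℕ) : SimpleGraph (Fin n) :=
  SimpleGraph.fromRel (fun i j =>
    ((i : ℕ) = 0 ∧ (j : ℕ) = 1) ∨ ((i : ℕ) = 0 ∧ (j : ℕ) = 2) ∨
      (2 ≤ (i : ℕ) ∧ (j : ℕ) = (i : ℕ) + 1))

/-- Total degree of a monomial (exponent vector). -/
def mdeg {n : ℕ} (m : Fin n →₀ ℕ) : ℕ := m.sum fun _ e => e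

/-- The (degree) reverse lexicographic order induced by `x_1 > x_2 > ⋯`: `a < b` iff
`a` has smaller degree, or degrees agree and at the largest index where they differ,
`a` has the larger exponent. -/
def revLexLT {n : ℕ} (a b : Fin n →₀ ℕ) : Prop :=
  mdeg a < mdeg b ∨
    (mdeg a = mdeg b ∧ ∃ k : Fin n, b k < a k ∧ ∀ l : Fin n, k < l → a l = b l)

/-- `m` is the leading monomial of `f` w.r.t. the reverse lexicographic order. -/
def IsLeadMonomial {n : ℕ} {K : Type*} [Field K]
    (f : MvPolynomial (Fin n) K) (m : Fin n →₀ ℕ) : Prop :=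
  m ∈ f.support ∧ ∀ m' ∈ f.support, m' = m ∨ revLexLT m' m

/-- The initial ideal of `I` w.r.t. the reverse lexicographic order: the ideal generated by
the leading monomials of the nonzero elements of `I`. -/
noncomputable def initialIdeal {n : ℕ} (K : Type*) [Field K]
    (I : Ideal (MvPolynomial (Fin n) K)) : Ideal (MvPolynomial (Fin n) K) :=
  Ideal.span { p | ∃ f ∈ I, ∃ m, IsLeadMonomial f m ∧ p = monomial m 1 }

/-- `B` is a Gröbner basis of `I` w.r.t. the reverse lexicographic order: `B ⊆ I` and the
leading monomials of the elements of `B` generate the initial ideal of `I`. -/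
def IsGroebnerBasis {n : ℕ} (K : Type*) [Field K]
    (B : Set (MvPolynomial (Fin n) K)) (I : Ideal (MvPolynomial (Fin n) K)) : Prop :=
  B ⊆ (I : Set (MvPolynomial (Fin n) K)) ∧
    initialIdeal K I =
      Ideal.span { p | ∃ f ∈ B, ∃ m, IsLeadMonomial f m ∧ p = monomial m 1 }

/-!
Orient every element of the proposed basis from its revlex-leading monomial to its other
monomial. This gives a rewriting relation on exponent vectors that strictly decreases the
monomial order, and the sum of the coefficients of `f` over any union of its equivalence
classes vanishes on the ideal spanned by the binomials. If every critical pair (the two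
reducts of the lcm of two leading monomials) joins within one step on each side, the
rewriting is confluent, so an irreducible monomial is the least element of its class. It
therefore cannot be the leading monomial of an element of the ideal: the initial ideal is
generated by the leading monomials of the basis. For `T₁` only two critical pairs overlap,
`x₂²` with `x₂x₃` and `x₂x₃` with `x₁x₃²`; the first is resolved by the cubic and the second
by `g₁₂`. The remaining pairs are coprime.
-/

open Relation

section AbstractRewriting

variable {α : Type*} {s : α → α → Prop}

theorem eq_or_lt_of_reflTransGen {lt : α → α → Prop} [IsTrans α lt]
    (hlt : ∀ a b, s a b → lt b a) {a b : α} (h : ReflTransGen s a b) : a = b ∨ lt b a := by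
  induction h with
  | refl => exact Or.inl rfl
  | tail _ hbc ih =>
    rcases ih with rfl | hba
    · exact Or.inr (hlt _ _ hbc)
    · exact Or.inr (_root_.trans (hlt _ _ hbc) hba)

theorem reflTransGen_of_eqvGen_of_normal
    (hjoin : ∀ a b c, s a b → s a c → Join (ReflGen s) b c) {a m : α}
    (hm : ∀ b, ¬ s m b) (h : EqvGen s a m) : ReflTransGen s a m := by
  have hequiv := equivalence_join_reflTransGen fun a b c hab hac =>
    let ⟨d, hbd, hcd⟩ := hjoin a b c hab hac
    ⟨d, hbd, hcd.to_reflTransGen⟩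
  obtain ⟨d, had, hmd⟩ := hequiv.eqvGen_iff.mp (h.mono fun _ b hab => ⟨b, .single hab, .refl⟩)
  rcases hmd.cases_head with rfl | ⟨b, hmb, -⟩
  · exact had
  · exact absurd hmb (hm b)

end AbstractRewriting

section MonomialRewriting

variable {σ : Type*} (r : (σ →₀ ℕ) → (σ →₀ ℕ) → Prop)

def RewriteStep (u v : σ →₀ ℕ) : Prop :=
  ∃ c a b, r a b ∧ u = c + a ∧ v = c + b

/-- `a₁ ⊔ a₂` is the lcm of the two left-hand sides. -/
def CriticalPairJoins (a₁ b₁ a₂ b₂ : σ →₀ ℕ) : Prop :=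
  Join (ReflGen (RewriteStep r)) (a₁ ⊔ a₂ - a₁ + b₁) (a₁ ⊔ a₂ - a₂ + b₂)

variable {r}

theorem RewriteStep.of_rule {a b : σ →₀ ℕ} (h : r a b) (c : σ →₀ ℕ) :
    RewriteStep r (c + a) (c + b) :=
  ⟨c, a, b, h, rfl, rfl⟩

theorem RewriteStep.add_left {u v : σ →₀ ℕ} (h : RewriteStep r u v) (w : σ →₀ ℕ) :
    RewriteStep r (w + u) (w + v) := by
  obtain ⟨c, a, b, hab, rfl, rfl⟩ := h
  simpa only [add_assoc] using RewriteStep.of_rule hab (w + c)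

theorem join_reflGen_rewriteStep_add_left {u v : σ →₀ ℕ}
    (h : Join (ReflGen (RewriteStep r)) u v) (w : σ →₀ ℕ) :
    Join (ReflGen (RewriteStep r)) (w + u) (w + v) := by
  have shift : ∀ {x y}, ReflGen (RewriteStep r) x y → ReflGen (RewriteStep r) (w + x) (w + y) := by
    rintro x y (_ | hxy)
    exacts [.refl, .single (hxy.add_left w)]
  obtain ⟨d, hud, hvd⟩ := h
  exact ⟨w + d, shift hud, shift hvd⟩

theorem CriticalPairJoins.symm {a₁ b₁ a₂ b₂ : σ →₀ ℕ} (h : CriticalPairJoins r a₁ b₁ a₂ b₂) :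
    CriticalPairJoins r a₂ b₂ a₁ b₁ := by
  rw [CriticalPairJoins, sup_comm]
  exact Join.symm.symm _ _ h

theorem criticalPairJoins_self (a b : σ →₀ ℕ) : CriticalPairJoins r a b a b :=
  ⟨_, ReflGen.refl, ReflGen.refl⟩

theorem criticalPairJoins_of_sup_eq {a₁ b₁ a₂ b₂ s₁ s₂ : σ →₀ ℕ}
    (h₁ : a₁ ⊔ a₂ = s₁ + a₁) (h₂ : a₁ ⊔ a₂ = s₂ + a₂)
    (h : Join (ReflGen (RewriteStep r)) (s₁ + b₁) (s₂ + b₂)) :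
    CriticalPairJoins r a₁ b₁ a₂ b₂ := by
  rwa [CriticalPairJoins, h₁, add_tsub_cancel_right, ← h₁, h₂, add_tsub_cancel_right]

theorem criticalPairJoins_of_disjoint {a₁ b₁ a₂ b₂ : σ →₀ ℕ} (h₁ : r a₁ b₁) (h₂ : r a₂ b₂)
    (hd : ∀ x, a₁ x = 0 ∨ a₂ x = 0) : CriticalPairJoins r a₁ b₁ a₂ b₂ := by
  have hsup : a₁ ⊔ a₂ = a₂ + a₁ := by
    ext x
    simp only [Finsupp.sup_apply, Finsupp.coe_add, Pi.add_apply]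
    rcases hd x with h | h <;> omega
  refine criticalPairJoins_of_sup_eq hsup (hsup.trans (add_comm _ _)) ⟨b₂ + b₁, ?_, ?_⟩
  · rw [add_comm a₂, add_comm b₂]
    exact ReflGen.single (RewriteStep.of_rule h₂ b₁)
  · rw [add_comm a₁]
    exact ReflGen.single (RewriteStep.of_rule h₁ b₂)

theorem join_of_criticalPairJoins
    (hcp : ∀ a₁ b₁ a₂ b₂, r a₁ b₁ → r a₂ b₂ → CriticalPairJoins r a₁ b₁ a₂ b₂)
    (m p q : σ →₀ ℕ) (hp : RewriteStep r m p) (hq : RewriteStep r m q) :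
    Join (ReflGen (RewriteStep r)) p q := by
  obtain ⟨c₁, a₁, b₁, h₁, rfl, rfl⟩ := hp
  obtain ⟨c₂, a₂, b₂, h₂, hm, rfl⟩ := hq
  have hle : a₁ ⊔ a₂ ≤ c₁ + a₁ := sup_le le_add_self (hm ▸ le_add_self)
  obtain ⟨e, he⟩ := le_iff_exists_add'.mp hle
  have hc₁ : c₁ = e + (a₁ ⊔ a₂ - a₁) := add_right_cancel (b := a₁) <| by
    rw [he, add_assoc, tsub_add_cancel_of_le le_sup_left]
  have hc₂ : c₂ = e + (a₁ ⊔ a₂ - a₂) := add_right_cancel (b := a₂) <| by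
    rw [← hm, he, add_assoc, tsub_add_cancel_of_le le_sup_right]
  rw [hc₁, hc₂, add_assoc, add_assoc]
  exact join_reflGen_rewriteStep_add_left (hcp _ _ _ _ h₁ h₂) e

end MonomialRewriting

section CoeffSum

variable {σ R : Type*} [CommRing R]

noncomputable def coeffSum (P : Set (σ →₀ ℕ)) : MvPolynomial σ R →ₗ[R] R :=
  (basisMonomials σ R).constr R (P.indicator 1)

theorem coeffSum_monomial (P : Set (σ →₀ ℕ)) (m : σ →₀ ℕ) (c : R) :
    coeffSum P (monomial m c) = c * P.indicator 1 m := by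
  have h := (basisMonomials σ R).constr_basis R (P.indicator (1 : (σ →₀ ℕ) → R)) m
  rw [coe_basisMonomials] at h
  have hc : (monomial m c : MvPolynomial σ R) = c • monomial m 1 := by
    rw [smul_monomial, smul_eq_mul, mul_one]
  rw [coeffSum, hc, map_smul, h, smul_eq_mul]

theorem coeffSum_monomial_mul (P : Set (σ →₀ ℕ)) (w : σ →₀ ℕ) (c : R) (f : MvPolynomial σ R) :
    coeffSum P (monomial w c * f) = c * coeffSum ((w + ·) ⁻¹' P) f := by
  classical
  induction f using MvPolynomial.induction_on' with
  | monomial u d =>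
    rw [monomial_mul, coeffSum_monomial, coeffSum_monomial, Set.indicator_apply,
      Set.indicator_apply, Set.mem_preimage]
    split_ifs <;> simp only [Pi.one_apply, mul_one, mul_zero]
  | add f g hf hg => rw [mul_add, map_add, map_add, hf, hg, mul_add]

theorem coeffSum_eq_single {P : Set (σ →₀ ℕ)} {f : MvPolynomial σ R} {m : σ →₀ ℕ} (hm : m ∈ P)
    (hP : ∀ u ∈ f.support, u ∈ P → u = m) : coeffSum P f = coeff m f := by
  conv_lhs => rw [f.as_sum]
  rw [map_sum, Finset.sum_eq_single m]
  · rw [coeffSum_monomial, Set.indicator_of_mem hm, Pi.one_apply, mul_one]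
  · intro u hu hum
    rw [coeffSum_monomial, Set.indicator_of_notMem (fun h => hum (hP u hu h)), mul_zero]
  · intro hm'
    rw [notMem_support_iff.mp hm', map_zero, map_zero]

end CoeffSum

section BinomialIdeal

variable {σ R : Type*} [CommRing R] {r : (σ →₀ ℕ) → (σ →₀ ℕ) → Prop}

variable (R r) in
def binomials : Set (MvPolynomial σ R) :=
  {f | ∃ a b, r a b ∧ f = monomial b 1 - monomial a 1}

theorem coeffSum_eq_zero_of_mem_span_binomials {P : Set (σ →₀ ℕ)}
    (hP : ∀ u v, RewriteStep r u v → (u ∈ P ↔ v ∈ P)) {f : MvPolynomial σ R}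
    (hf : f ∈ Ideal.span (binomials R r)) : coeffSum P f = 0 := by
  classical
  induction hf using Submodule.span_induction generalizing P with
  | mem f hf =>
    obtain ⟨a, b, hab, rfl⟩ := hf
    have hPab := hP _ _ (by simpa only [zero_add] using RewriteStep.of_rule hab 0)
    simp only [map_sub, coeffSum_monomial, Set.indicator_apply, Pi.one_apply, hPab, sub_self]
  | zero => exact map_zero _
  | add f g _ _ hf hg => rw [map_add, hf hP, hg hP, add_zero]
  | smul g f _ hf =>
    rw [smul_eq_mul]
    induction g using MvPolynomial.induction_on' with
    | monomial w c =>
      rw [coeffSum_monomial_mul, hf (P := (w + ·) ⁻¹' P) fun u v huv => hP _ _ (huv.add_left w),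
        mul_zero]
    | add g g' hg hg' => rw [add_mul, map_add, hg, hg', add_zero]

theorem coeff_eq_zero_of_normal {lt : (σ →₀ ℕ) → (σ →₀ ℕ) → Prop} [IsStrictOrder (σ →₀ ℕ) lt]
    (hlt : ∀ u v, RewriteStep r u v → lt v u)
    (hcp : ∀ a₁ b₁ a₂ b₂, r a₁ b₁ → r a₂ b₂ → CriticalPairJoins r a₁ b₁ a₂ b₂)
    {f : MvPolynomial σ R} (hf : f ∈ Ideal.span (binomials R r)) {m : σ →₀ ℕ}
    (hm : ∀ v, ¬ RewriteStep r m v) (hlead : ∀ u ∈ f.support, u = m ∨ lt u m) :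
    coeff m f = 0 := by
  let P : Set (σ →₀ ℕ) := {u | EqvGen (RewriteStep r) u m}
  have hP : ∀ u v, RewriteStep r u v → (u ∈ P ↔ v ∈ P) := fun u v huv =>
    ⟨(EqvGen.trans _ _ _ (.symm _ _ (.rel _ _ huv)) ·), (EqvGen.trans _ _ _ (.rel _ _ huv) ·)⟩
  rw [← coeffSum_eq_single (P := P) (EqvGen.refl m) fun u hu huP => ?_,
    coeffSum_eq_zero_of_mem_span_binomials hP hf]
  have hum := reflTransGen_of_eqvGen_of_normal (join_of_criticalPairJoins hcp) hm huP
  rcases eq_or_lt_of_reflTransGen hlt hum with h | h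
  exacts [h, (hlead u hu).resolve_right (asymm h)]

end BinomialIdeal

section RevLex

variable {n : ℕ}

theorem mdeg_add (a b : Fin n →₀ ℕ) : mdeg (a + b) = mdeg a + mdeg b :=
  Finsupp.sum_add_index' (fun _ => rfl) fun _ _ _ => rfl

theorem mdeg_single (i : Fin n) (e : ℕ) : mdeg (Finsupp.single i e) = e :=
  Finsupp.sum_single_index rfl

theorem revLexLT_irrefl (a : Fin n →₀ ℕ) : ¬ revLexLT a a := by
  rintro (h | ⟨-, k, hk, -⟩) <;> omega

theorem revLexLT_trans {a b c : Fin n →₀ ℕ} (hab : revLexLT a b) (hbc : revLexLT b c) :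
    revLexLT a c := by
  rcases hab with hab | ⟨hab, k, hk, hl⟩ <;> rcases hbc with hbc | ⟨hbc, k', hk', hl'⟩
  · exact Or.inl (hab.trans hbc)
  · exact Or.inl (hbc ▸ hab)
  · exact Or.inl (hab ▸ hbc)
  · refine Or.inr ⟨hab.trans hbc, ?_⟩
    rcases lt_trichotomy k k' with h | rfl | h
    · exact ⟨k', hl k' h ▸ hk', fun l hl'' => (hl l (h.trans hl'')).trans (hl' l hl'')⟩
    · exact ⟨k, hk'.trans hk, fun l hl'' => (hl l hl'').trans (hl' l hl'')⟩
    · exact ⟨k, (hl' k h).symm ▸ hk, fun l hl'' => (hl l hl'').trans (hl' l (h.trans hl''))⟩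

theorem revLexLT.add_left {a b : Fin n →₀ ℕ} (h : revLexLT a b) (c : Fin n →₀ ℕ) :
    revLexLT (c + a) (c + b) := by
  simp only [revLexLT, mdeg_add, Finsupp.coe_add, Pi.add_apply, add_lt_add_iff_left,
    add_right_inj]
  exact h

instance : IsStrictOrder (Fin n →₀ ℕ) revLexLT where
  irrefl := revLexLT_irrefl
  trans _ _ _ := revLexLT_trans

end RevLex

section GroebnerCriterion

variable {n : ℕ} {K : Type*} [Field K] {r : (Fin n →₀ ℕ) → (Fin n →₀ ℕ) → Prop}

theorem isLeadMonomial_monomial_sub_monomial {a b : Fin n →₀ ℕ} (h : revLexLT b a) :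
    IsLeadMonomial (monomial b 1 - monomial a 1 : MvPolynomial (Fin n) K) a := by
  have hba : b ≠ a := fun hba => revLexLT_irrefl a (hba ▸ h)
  refine ⟨?_, fun u hu => ?_⟩
  · rw [mem_support_iff, coeff_sub, coeff_monomial, coeff_monomial, if_neg hba, if_pos rfl]
    exact sub_ne_zero.mpr zero_ne_one
  · rcases Finset.mem_union.mp (support_sub _ _ _ hu) with hu | hu
    · exact Or.inr (Finset.mem_singleton.mp (support_monomial_subset hu) ▸ h)
    · exact Or.inl (Finset.mem_singleton.mp (support_monomial_subset hu))

theorem initialIdeal_le_span_lhsMonomials (hdec : ∀ a b, r a b → revLexLT b a)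
    (hcp : ∀ a₁ b₁ a₂ b₂, r a₁ b₁ → r a₂ b₂ → CriticalPairJoins r a₁ b₁ a₂ b₂)
    {I : Ideal (MvPolynomial (Fin n) K)} (hI : I ≤ Ideal.span (binomials K r)) :
    initialIdeal K I ≤ Ideal.span {p | ∃ a b, r a b ∧ p = monomial a 1} := by
  rw [initialIdeal, Ideal.span_le]
  rintro _ ⟨f, hf, m, hm, rfl⟩
  by_cases hred : ∃ v, RewriteStep r m v
  · obtain ⟨v, c, a, b, hab, rfl, -⟩ := hred
    rw [show (monomial (c + a) 1 : MvPolynomial (Fin n) K) = monomial c 1 * monomial a 1 by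
      rw [monomial_mul, one_mul]]
    exact Ideal.mul_mem_left _ _ (Ideal.subset_span ⟨a, b, hab, rfl⟩)
  · have hstep : ∀ u v, RewriteStep r u v → revLexLT v u := by
      rintro _ _ ⟨c, a, b, hab, rfl, rfl⟩
      exact (hdec a b hab).add_left c
    exact absurd (coeff_eq_zero_of_normal hstep hcp (hI hf) (not_exists.mp hred) hm.2)
      (mem_support_iff.mp hm.1)

theorem isGroebnerBasis_binomials (hdec : ∀ a b, r a b → revLexLT b a)
    (hcp : ∀ a₁ b₁ a₂ b₂, r a₁ b₁ → r a₂ b₂ → CriticalPairJoins r a₁ b₁ a₂ b₂)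
    {I : Ideal (MvPolynomial (Fin n) K)} (hI : I = Ideal.span (binomials K r)) :
    IsGroebnerBasis K (binomials K r) I ∧
      initialIdeal K I = Ideal.span {p | ∃ a b, r a b ∧ p = monomial a 1} := by
  have hsub : binomials K r ⊆ I := hI ▸ Ideal.subset_span
  have hini := initialIdeal_le_span_lhsMonomials hdec hcp hI.le
  have hlhs : Ideal.span {p | ∃ a b, r a b ∧ p = (monomial a 1 : MvPolynomial (Fin n) K)} ≤
      Ideal.span {p | ∃ f ∈ binomials K r, ∃ m, IsLeadMonomial f m ∧ p = monomial m 1} := by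
    refine Ideal.span_mono ?_
    rintro _ ⟨a, b, hab, rfl⟩
    exact ⟨_, ⟨a, b, hab, rfl⟩, a, isLeadMonomial_monomial_sub_monomial (hdec a b hab), rfl⟩
  have hbasis : Ideal.span {p | ∃ f ∈ binomials K r, ∃ m, IsLeadMonomial f m ∧ p = monomial m 1} ≤
      initialIdeal K I := by
    refine Ideal.span_mono ?_
    rintro _ ⟨f, hf, m, hm, rfl⟩
    exact ⟨f, hsub hf, m, hm, rfl⟩
  exact ⟨⟨hsub, le_antisymm (hini.trans hlhs) hbasis⟩, le_antisymm hini (hlhs.trans hbasis)⟩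

end GroebnerCriterion

section T1Rewriting

open Finsupp (single)

variable {n : ℕ}

/-- `T1Rule n a b`: `x^b - x^a` is in the basis, with leading monomial `x^a`. In the paper's
1-based variables `sq k` is `g_{k,k+1}`, `mixed` is `g_{13}` and `cubic` is
`x_1x_2x_4 - x_1x_3²`. -/
inductive T1Rule (n : ℕ) : (Fin (n + 1) →₀ ℕ) → (Fin (n + 1) →₀ ℕ) → Prop
  | sq (k : Fin (n + 1)) (hk : (k : ℕ) = 1 ∨ 3 ≤ (k : ℕ) ∧ (k : ℕ) ≤ n - 1) :
      T1Rule n (single k 2) (single (k - 1) 1 + single (k + 1) 1)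
  | mixed : T1Rule n (single 1 1 + single 2 1) (single 0 1 + single 3 1)
  | cubic : T1Rule n (single 0 1 + single 2 2) (single 0 1 + single 1 1 + single 3 1)

theorem Fin.val_one_two_three (hn : 3 ≤ n) :
    ((1 : Fin (n + 1)) : ℕ) = 1 ∧ ((2 : Fin (n + 1)) : ℕ) = 2 ∧ ((3 : Fin (n + 1)) : ℕ) = 3 := by
  refine ⟨?_, ?_, ?_⟩ <;> simp <;> omega

theorem Fin.val_sub_one_add_one {k : Fin (n + 1)} (h₁ : 1 ≤ (k : ℕ)) (h₂ : (k : ℕ) < n) :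
    ((k - 1 : Fin (n + 1)) : ℕ) = k - 1 ∧ ((k + 1 : Fin (n + 1)) : ℕ) = k + 1 := by
  refine ⟨?_, Fin.val_add_one_of_lt (Fin.lt_last_iff_ne_last.mpr ?_)⟩
  · rw [Fin.coe_sub_one, if_neg (by rintro rfl; simp at h₁)]
  · exact fun h => by simp [h] at h₂

theorem T1Rule.revLexLT (hn : 3 ≤ n) {a b : Fin (n + 1) →₀ ℕ} (h : T1Rule n a b) :
    revLexLT b a := by
  obtain ⟨h1, h2, h3⟩ := Fin.val_one_two_three hn
  cases h with
  | sq k hk =>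
    obtain ⟨hkm, hkp⟩ := Fin.val_sub_one_add_one (k := k) (by omega) (by omega)
    refine Or.inr ⟨by simp only [mdeg_add, mdeg_single], k + 1, ?_, fun l hl => ?_⟩
    · simp only [Finsupp.coe_add, Pi.add_apply, Finsupp.single_apply, Fin.ext_iff, hkm, hkp]
      split_ifs <;> omega
    · rw [Fin.lt_def, hkp] at hl
      simp only [Finsupp.coe_add, Pi.add_apply, Finsupp.single_apply, Fin.ext_iff, hkm, hkp]
      split_ifs <;> omega
  | mixed | cubic =>
    refine Or.inr ⟨by simp only [mdeg_add, mdeg_single], 3, ?_, fun l hl => ?_⟩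
    · simp only [Finsupp.coe_add, Pi.add_apply, Finsupp.single_apply, Fin.ext_iff, Fin.val_zero,
        h1, h2, h3]
      split_ifs <;> omega
    · rw [Fin.lt_def, h3] at hl
      simp only [Finsupp.coe_add, Pi.add_apply, Finsupp.single_apply, Fin.ext_iff, Fin.val_zero,
        h1, h2, h3]
      split_ifs <;> omega

theorem T1Rule.criticalPairJoins_sq_sq {k k' : Fin (n + 1)}
    (hk : (k : ℕ) = 1 ∨ 3 ≤ (k : ℕ) ∧ (k : ℕ) ≤ n - 1)
    (hk' : (k' : ℕ) = 1 ∨ 3 ≤ (k' : ℕ) ∧ (k' : ℕ) ≤ n - 1) :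
    CriticalPairJoins (T1Rule n) (single k 2) (single (k - 1) 1 + single (k + 1) 1)
      (single k' 2) (single (k' - 1) 1 + single (k' + 1) 1) := by
  by_cases hkk : k = k'
  · subst hkk
    exact criticalPairJoins_self _ _
  · refine criticalPairJoins_of_disjoint (.sq k hk) (.sq k' hk') fun x => ?_
    rw [Fin.ext_iff] at hkk
    simp only [Finsupp.single_apply, Fin.ext_iff]
    split_ifs <;> omega

theorem T1Rule.criticalPairJoins_sq_mixed (hn : 3 ≤ n) {k : Fin (n + 1)}
    (hk : (k : ℕ) = 1 ∨ 3 ≤ (k : ℕ) ∧ (k : ℕ) ≤ n - 1) :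
    CriticalPairJoins (T1Rule n) (single k 2) (single (k - 1) 1 + single (k + 1) 1)
      (single 1 1 + single 2 1) (single 0 1 + single 3 1) := by
  obtain ⟨h1, h2, h3⟩ := Fin.val_one_two_three hn
  rcases hk with hk | hk
  · obtain rfl : k = 1 := Fin.ext (hk.trans h1.symm)
    obtain ⟨hsub, hadd⟩ := Fin.val_sub_one_add_one (k := 1) (by omega) (by omega)
    refine criticalPairJoins_of_sup_eq (s₁ := single 2 1) (s₂ := single 1 1) ?_ ?_
      ⟨_, .single ⟨0, _, _, .cubic, ?_, ?_⟩, .refl⟩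
    all_goals
      ext x
      simp only [Finsupp.sup_apply, Finsupp.coe_add, Finsupp.coe_zero, Pi.add_apply,
        Pi.zero_apply, Finsupp.single_apply, Fin.ext_iff, Fin.val_zero, hsub, hadd, h1, h2, h3]
      split_ifs <;> omega
  · refine criticalPairJoins_of_disjoint (.sq k (.inr hk)) .mixed fun x => ?_
    simp only [Finsupp.coe_add, Pi.add_apply, Finsupp.single_apply, Fin.ext_iff, h1, h2]
    split_ifs <;> omega

theorem T1Rule.criticalPairJoins_sq_cubic (hn : 3 ≤ n) {k : Fin (n + 1)}
    (hk : (k : ℕ) = 1 ∨ 3 ≤ (k : ℕ) ∧ (k : ℕ) ≤ n - 1) :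
    CriticalPairJoins (T1Rule n) (single k 2) (single (k - 1) 1 + single (k + 1) 1)
      (single 0 1 + single 2 2) (single 0 1 + single 1 1 + single 3 1) := by
  obtain ⟨-, h2, -⟩ := Fin.val_one_two_three hn
  refine criticalPairJoins_of_disjoint (.sq k hk) .cubic fun x => ?_
  simp only [Finsupp.coe_add, Pi.add_apply, Finsupp.single_apply, Fin.ext_iff, Fin.val_zero, h2]
  split_ifs <;> omega

theorem T1Rule.criticalPairJoins_mixed_cubic (hn : 3 ≤ n) :
    CriticalPairJoins (T1Rule n) (single 1 1 + single 2 1) (single 0 1 + single 3 1)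
      (single 0 1 + single 2 2) (single 0 1 + single 1 1 + single 3 1) := by
  obtain ⟨h1, h2, h3⟩ := Fin.val_one_two_three hn
  obtain ⟨hsub, hadd⟩ := Fin.val_sub_one_add_one (k := 1) (by omega) (by omega)
  refine criticalPairJoins_of_sup_eq (s₁ := single 0 1 + single 2 1) (s₂ := single 1 1) ?_ ?_
    ⟨_, .refl, .single ⟨single 0 1 + single 3 1, _, _, .sq 1 (.inl h1), ?_, ?_⟩⟩
  all_goals
    ext x
    simp only [Finsupp.sup_apply, Finsupp.coe_add, Pi.add_apply, Finsupp.single_apply,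
      Fin.ext_iff, Fin.val_zero, hsub, hadd, h1, h2, h3]
    split_ifs <;> omega

theorem T1Rule.criticalPairJoins (hn : 3 ≤ n) {a₁ b₁ a₂ b₂ : Fin (n + 1) →₀ ℕ}
    (h₁ : T1Rule n a₁ b₁) (h₂ : T1Rule n a₂ b₂) : CriticalPairJoins (T1Rule n) a₁ b₁ a₂ b₂ := by
  rcases h₁ with ⟨k, hk⟩ | _ | _ <;> rcases h₂ with ⟨k', hk'⟩ | _ | _
  exacts [criticalPairJoins_sq_sq hk hk', criticalPairJoins_sq_mixed hn hk,
    criticalPairJoins_sq_cubic hn hk, (criticalPairJoins_sq_mixed hn hk').symm,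
    criticalPairJoins_self _ _, criticalPairJoins_mixed_cubic hn,
    (criticalPairJoins_sq_cubic hn hk').symm, (criticalPairJoins_mixed_cubic hn).symm,
    criticalPairJoins_self _ _]

end T1Rewriting

section T1Ideal

open Finsupp (single)

variable {n : ℕ} {K : Type*} [Field K]

theorem MvPolynomial.monomial_single_add_single {σ R : Type*} [CommSemiring R] (i j : σ) :
    monomial (single i 1 + single j 1) (1 : R) = X i * X j := by
  rw [X, X, monomial_mul, one_mul]

theorem hg_eq_of_val_add_one_eq {i j : Fin n} {k : Fin (n + 1)} (hi : (i : ℕ) + 1 = k)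
    (hj : (j : ℕ) = k) : hg n K i j = X (k - 1) * X (k + 1) - X k ^ 2 := by
  obtain ⟨hkm, hkp⟩ := Fin.val_sub_one_add_one (k := k) (by omega) (by omega)
  have e₁ : i.castSucc = k - 1 := Fin.ext (by rw [Fin.val_castSucc, hkm]; omega)
  have e₂ : j.succ = k + 1 := Fin.ext (by rw [Fin.val_succ, hkp, hj])
  have e₃ : j.castSucc = k := Fin.ext (by rw [Fin.val_castSucc, hj])
  have e₄ : i.succ = k := Fin.ext (by rw [Fin.val_succ, hi])
  rw [hg, e₁, e₂, e₃, e₄, sq]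

theorem hg_eq_of_val_eq_zero_one (hn : 3 ≤ n) {i j : Fin n} (hi : (i : ℕ) = 0) (hj : (j : ℕ) = 1) :
    hg n K i j = X 0 * X 2 - X 1 ^ 2 := by
  obtain ⟨h1, h2, -⟩ := Fin.val_one_two_three hn
  rw [hg, sq]
  congr 3 <;>
    exact Fin.ext (by simp only [Fin.val_castSucc, Fin.val_succ, Fin.val_zero, hi, hj, h1, h2])

theorem hg_eq_of_val_eq_zero_two (hn : 3 ≤ n) {i j : Fin n} (hi : (i : ℕ) = 0) (hj : (j : ℕ) = 2) :
    hg n K i j = X 0 * X 3 - X 1 * X 2 := by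
  obtain ⟨h1, h2, h3⟩ := Fin.val_one_two_three hn
  rw [hg, mul_comm (X 1) (X 2)]
  congr 3 <;>
    exact Fin.ext (by simp only [Fin.val_castSucc, Fin.val_succ, Fin.val_zero, hi, hj, h1, h2, h3])

theorem T1graph_adj_iff_of_lt {i j : Fin n} (hij : i < j) :
    (T1graph n).Adj i j ↔ ((i : ℕ) = 0 ∧ (j : ℕ) = 1) ∨ ((i : ℕ) = 0 ∧ (j : ℕ) = 2) ∨
      (2 ≤ (i : ℕ) ∧ (j : ℕ) = i + 1) := by
  rw [T1graph, SimpleGraph.fromRel_adj]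
  rw [Fin.lt_def] at hij
  constructor
  · rintro ⟨-, h | h⟩
    · exact h
    · omega
  · exact fun h => ⟨Fin.ne_of_lt hij, .inl h⟩

theorem binomials_T1Rule (hn : 3 ≤ n) (i₀ i₁ i₂ : Fin n) (h₀ : (i₀ : ℕ) = 0) (h₁ : (i₁ : ℕ) = 1)
    (h₂ : (i₂ : ℕ) = 2) :
    binomials K (T1Rule n) =
      {X 0 * X 1 * X 3 - X 0 * X 2 ^ 2, hg n K i₀ i₁, hg n K i₀ i₂} ∪
        { f | ∃ i j : Fin n, 2 ≤ (i : ℕ) ∧ (j : ℕ) = (i : ℕ) + 1 ∧ f = hg n K i j } := by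
  obtain ⟨h1, -, -⟩ := Fin.val_one_two_three hn
  have hsq (k : Fin (n + 1)) : monomial (single (k - 1) 1 + single (k + 1) 1) 1 -
      monomial (single k 2) 1 = (X (k - 1) * X (k + 1) - X k ^ 2 : MvPolynomial _ K) := by
    rw [monomial_single_add_single, X_pow_eq_monomial]
  have hmixed : monomial (single 0 1 + single 3 1) 1 - monomial (single 1 1 + single 2 1) 1 =
      (X 0 * X 3 - X 1 * X 2 : MvPolynomial (Fin (n + 1)) K) := by
    rw [monomial_single_add_single, monomial_single_add_single]
  have hcubic : monomial (single 0 1 + single 1 1 + single 3 1) 1 -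
      monomial (single 0 1 + single 2 2) 1 =
      (X 0 * X 1 * X 3 - X 0 * X 2 ^ 2 : MvPolynomial (Fin (n + 1)) K) := by
    rw [X_pow_eq_monomial]
    simp only [X, monomial_mul, one_mul]
  ext f
  constructor
  · rintro ⟨a, b, hab, rfl⟩
    rcases hab with ⟨k, hk | hk⟩ | _ | _
    · rw [hsq, ← hg_eq_of_val_add_one_eq (i := i₀) (j := i₁) (by rw [h₀, hk]) (h₁.trans hk.symm)]
      simp
    · rw [hsq, ← hg_eq_of_val_add_one_eq (i := ⟨k - 1, by omega⟩) (j := ⟨k, by omega⟩)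
        (by simp only; omega) rfl]
      exact .inr ⟨_, _, by simp only; omega, by simp only; omega, rfl⟩
    · rw [hmixed, ← hg_eq_of_val_eq_zero_two hn h₀ h₂]
      simp
    · rw [hcubic]
      simp
  · rintro ((rfl | rfl | rfl) | ⟨i, j, hi, hj, rfl⟩)
    · exact ⟨_, _, .cubic, hcubic.symm⟩
    · refine ⟨_, _, .sq 1 (.inl h1), ?_⟩
      rw [hsq, hg_eq_of_val_add_one_eq (by rw [h₀, h1]) (h₁.trans h1.symm)]
    · exact ⟨_, _, .mixed, by rw [hmixed, hg_eq_of_val_eq_zero_two hn h₀ h₂]⟩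
    · refine ⟨_, _, .sq i.succ (.inr ⟨by simp only [Fin.val_succ]; omega, ?_⟩), ?_⟩
      · have := j.isLt
        simp only [Fin.val_succ]
        omega
      · rw [hsq, hg_eq_of_val_add_one_eq (Fin.val_succ i).symm (by rw [hj, Fin.val_succ])]

theorem lhsMonomials_T1Rule (hn : 3 ≤ n) :
    {p | ∃ a b, T1Rule n a b ∧ p = (monomial a 1 : MvPolynomial (Fin (n + 1)) K)} =
      {X 1 * X 2, X 0 * X 2 ^ 2, X 1 ^ 2} ∪
        { p | ∃ k : Fin (n + 1), 3 ≤ (k : ℕ) ∧ (k : ℕ) ≤ n - 1 ∧ p = X k ^ 2 } := by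
  obtain ⟨h1, -, -⟩ := Fin.val_one_two_three hn
  have hcubic : monomial (single 0 1 + single 2 2) 1 =
      (X 0 * X 2 ^ 2 : MvPolynomial (Fin (n + 1)) K) := by
    rw [X_pow_eq_monomial, X, monomial_mul, one_mul]
  ext p
  constructor
  · rintro ⟨a, b, hab, rfl⟩
    rcases hab with ⟨k, hk | hk⟩ | _ | _
    · obtain rfl : k = 1 := Fin.ext (hk.trans h1.symm)
      simp [X_pow_eq_monomial]
    · exact .inr ⟨k, hk.1, hk.2, X_pow_eq_monomial.symm⟩
    · simp [monomial_single_add_single]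
    · simp [hcubic]
  · rintro ((rfl | rfl | rfl) | ⟨k, hk₃, hk, rfl⟩)
    · exact ⟨_, _, .mixed, (monomial_single_add_single _ _).symm⟩
    · exact ⟨_, _, .cubic, hcubic.symm⟩
    · exact ⟨_, _, .sq 1 (.inl h1), X_pow_eq_monomial⟩
    · exact ⟨_, _, .sq k (.inr ⟨hk₃, hk⟩), X_pow_eq_monomial⟩

theorem hankelIdeal_T1graph (hn : 3 ≤ n) (i₀ i₁ i₂ : Fin n) (h₀ : (i₀ : ℕ) = 0)
    (h₁ : (i₁ : ℕ) = 1) (h₂ : (i₂ : ℕ) = 2) :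
    hankelIdeal n K (T1graph n) =
      Ideal.span ({X 0 * X 1 * X 3 - X 0 * X 2 ^ 2, hg n K i₀ i₁, hg n K i₀ i₂} ∪
        { f | ∃ i j : Fin n, 2 ≤ (i : ℕ) ∧ (j : ℕ) = (i : ℕ) + 1 ∧ f = hg n K i j }) := by
  have gen {i j : Fin n} (hij : (i : ℕ) < j) (h : (T1graph n).Adj i j) :
      hg n K i j ∈ hankelIdeal n K (T1graph n) :=
    Ideal.subset_span ⟨i, j, hij, h, rfl⟩
  have h01 := gen (by omega)
    ((T1graph_adj_iff_of_lt (by rw [Fin.lt_def]; omega)).mpr (.inl ⟨h₀, h₁⟩))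
  have h02 := gen (by omega)
    ((T1graph_adj_iff_of_lt (by rw [Fin.lt_def]; omega)).mpr (.inr (.inl ⟨h₀, h₂⟩)))
  apply le_antisymm
  · refine Ideal.span_mono ?_
    rintro _ ⟨i, j, hij, hadj, rfl⟩
    rcases (T1graph_adj_iff_of_lt hij).mp hadj with ⟨hi, hj⟩ | ⟨hi, hj⟩ | ⟨hi, hj⟩
    · obtain rfl : i = i₀ := Fin.ext (hi.trans h₀.symm)
      obtain rfl : j = i₁ := Fin.ext (hj.trans h₁.symm)
      simp
    · obtain rfl : i = i₀ := Fin.ext (hi.trans h₀.symm)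
      obtain rfl : j = i₂ := Fin.ext (hj.trans h₂.symm)
      simp
    · exact .inr ⟨i, j, hi, hj, rfl⟩
  · rw [Ideal.span_le]
    rintro _ ((rfl | rfl | rfl) | ⟨i, j, hi, hj, rfl⟩)
    · have hcubic : (X 0 * X 1 * X 3 - X 0 * X 2 ^ 2 : MvPolynomial (Fin (n + 1)) K) =
          X 1 * hg n K i₀ i₂ - X 2 * hg n K i₀ i₁ := by
        rw [hg_eq_of_val_eq_zero_one hn h₀ h₁, hg_eq_of_val_eq_zero_two hn h₀ h₂]
        ring
      rw [hcubic]
      exact sub_mem (Ideal.mul_mem_left _ _ h02) (Ideal.mul_mem_left _ _ h01)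
    · exact h01
    · exact h02
    · exact gen (by omega) ((T1graph_adj_iff_of_lt (by rw [Fin.lt_def]; omega)).mpr
        (.inr (.inr ⟨hi, hj⟩)))

end T1Ideal

/-- (0-indexed: `x_k` is `X (k-1)`.) The set
`{x_1x_2x_4 - x_1x_3², g_{12}, g_{13}, g_{i,i+1} (3 ≤ i ≤ n-1)}` is a Gröbner basis of
`I_{T₁}` w.r.t. the reverse lexicographic order, and hence
`ini(I_{T₁}) = (x_2x_3, x_1x_3², x_2², x_{i+1}² : 3 ≤ i ≤ n-1)`. -/
theorem stmt_17 (n : ℕ) (K : Type*) [Field K] (hn : 3 ≤ n) :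
    IsGroebnerBasis K
      ({X 0 * X 1 * X 3 - X 0 * X 2 ^ 2,
        hg n K ⟨0, by omega⟩ ⟨1, by omega⟩,
        hg n K ⟨0, by omega⟩ ⟨2, by omega⟩} ∪
        { f | ∃ i j : Fin n, 2 ≤ (i : ℕ) ∧ (j : ℕ) = (i : ℕ) + 1 ∧ f = hg n K i j })
      (hankelIdeal n K (T1graph n)) ∧
    initialIdeal K (hankelIdeal n K (T1graph n)) =
      Ideal.span ({X 1 * X 2, X 0 * X 2 ^ 2, X 1 ^ 2} ∪
        { p | ∃ k : Fin (n + 1), 3 ≤ (k : ℕ) ∧ (k : ℕ) ≤ n - 1 ∧ p = X k ^ 2 }) := by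
  have hB := binomials_T1Rule (K := K) hn ⟨0, by omega⟩ ⟨1, by omega⟩ ⟨2, by omega⟩ rfl rfl rfl
  have hI := hankelIdeal_T1graph (K := K) hn ⟨0, by omega⟩ ⟨1, by omega⟩ ⟨2, by omega⟩ rfl rfl rfl
  have h := isGroebnerBasis_binomials (fun _ _ => T1Rule.revLexLT hn)
    (fun _ _ _ _ => T1Rule.criticalPairJoins hn) (hI.trans (congrArg Ideal.span hB).symm)
  rwa [hB, lhsMonomials_T1Rule hn] at h
end
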